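/- arXiv:1907.02738 — 8 statements merged into one kernel-verified Lean document; each statement's English description precedes it below -/
import Mathlib

section
/- Let E = (E,+,',0,1) be a monotonous effect algebra with induced order ≤. Define a partial operation ⊙ by x⊙y := (x'+y')' (defined if and only if x' ≤ y) and a map → : E² → 2^E by x→y := x' + L(x,y) = {x'+c : c ∈ L(x,y)}. Then (E,≤,⊙,→,',0,1) is a divisible commutative unsharp residuated poset. -/
/-!
Complementation `x ↦ x'` is an order-reversing involution of an effect algebra, so `⊙` is `+`
transported along it and `U(x, y') = L(x', y)'`. With `A = L(x', y)` and `B = L(y, z)`, both inside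
`[0, y]`, the two sides of unsharp adjointness read `L((y' + A)') ≤ U(B)` and `L(A') ≤ U(y' + B)`.
Monotonicity with `x := y'` turns the first into the second, because `a ↦ (y' + a)'` is an
involution of `[0, y]`; complementing both sides, which exchanges lower and upper cones, gives the
converse by the same argument with `A` and `B` swapped. Divisibility is the same involution:
`y ⊙ (y' + c) = c` for `c ≤ y`.
-/

namespace Paper

variable {E : Type*}

/-- The lower cone `L(S)` of a subset w.r.t. an order relation. -/
def lcone (le : E → E → Prop) (S : Set E) : Set E := {x | ∀ y ∈ S, le x y}

/-- The upper cone `U(S)` of a subset w.r.t. an order relation. -/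
def ucone (le : E → E → Prop) (S : Set E) : Set E := {x | ∀ y ∈ S, le y x}

/-- `S ≤ T` for subsets: every element of `S` is below every element of `T`. -/
def setLE (le : E → E → Prop) (S T : Set E) : Prop := ∀ x ∈ S, ∀ y ∈ T, le x y

/-- Effect algebra axioms (E1)-(E4); the partial operation `+` is encoded via `Option`
(`add x y = some z` means `x + y` is defined with value `z`). -/
structure IsEffectAlgebra (add : E → E → Option E) (compl : E → E)
    (zero one : E) : Prop where
  /-- (E1) -/
  comm : ∀ x y, add x y = add y x
  /-- (E2) -/
  assoc : ∀ x y z, (add x y).bind (fun u => add u z) = (add y z).bind (fun v => add x v)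
  /-- (E3): `x'` is the unique `u` with `x + u = 1`. -/
  compl_iff : ∀ x u, add x u = some one ↔ u = compl x
  /-- (E4) -/
  one_add : ∀ x y, add one x = some y → x = zero

/-- The induced order: `x ≤ y` iff there is `z` with `x + z = y`. -/
def eaLe (add : E → E → Option E) (x y : E) : Prop := ∃ z, add x z = some y

/-- `x + A := {x + a : a ∈ A}`. -/
def addLSet (add : E → E → Option E) (x : E) (S : Set E) : Set E :=
  {z | ∃ a ∈ S, add x a = some z}

/-- `A + x := {a + x : a ∈ A}`. -/
def addRSet (add : E → E → Option E) (S : Set E) (x : E) : Set E :=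
  {z | ∃ a ∈ S, add a x = some z}

/-- A monotonous effect algebra: for every `x` and nonempty `A`, `B`, if `A ∪ B ≤ x'`
and `L(A) ≤ U(B)`, then `L(x + A) ≤ U(x + B)`. -/
def Monotonous (add : E → E → Option E) (compl : E → E) : Prop :=
  ∀ (x : E) (A B : Set E), A.Nonempty → B.Nonempty →
    (∀ a ∈ A ∪ B, eaLe add a (compl x)) →
    setLE (eaLe add) (lcone (eaLe add) A) (ucone (eaLe add) B) →
    setLE (eaLe add) (lcone (eaLe add) (addLSet add x A)) (ucone (eaLe add) (addLSet add x B))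

/-- The multiplication `x ⊙ y := (x' + y')'` derived from an effect algebra
(defined iff `x' + y'` is, i.e. iff `x' ≤ y`). -/
def eaOdot (add : E → E → Option E) (compl : E → E) (x y : E) : Option E :=
  (add (compl x) (compl y)).map compl

/-- The implication `x → y := x' + L(x,y)` derived from an effect algebra. -/
def eaImp (add : E → E → Option E) (compl : E → E) (x y : E) : Set E :=
  addLSet add (compl x) (lcone (eaLe add) {x, y})

/-- `S ⊙ y := {s ⊙ y : s ∈ S}`. -/
def odotLSet (odot : E → E → Option E) (S : Set E) (y : E) : Set E :=
  {w | ∃ s ∈ S, odot s y = some w}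

/-- `y ⊙ S := {y ⊙ s : s ∈ S}`. -/
def odotRSet (odot : E → E → Option E) (y : E) (S : Set E) : Set E :=
  {w | ∃ s ∈ S, odot y s = some w}

/-- Commutative unsharp residuated poset, axioms (C1)-(C4); `⊙` is a partial
operation encoded via `Option` and `→` maps pairs to subsets. -/
structure IsCURP (le : E → E → Prop) (odot : E → E → Option E) (imp : E → E → Set E)
    (compl : E → E) (zero one : E) : Prop where
  /-- (C1): bounded poset … -/
  le_refl : ∀ x, le x x
  le_antisymm : ∀ x y, le x y → le y x → x = y
  le_trans : ∀ x y z, le x y → le y z → le x z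
  zero_le : ∀ x, le zero x
  le_one : ∀ x, le x one
  /-- (C1): … with an antitone involution. -/
  compl_compl : ∀ x, compl (compl x) = x
  compl_antitone : ∀ x y, le x y → le (compl y) (compl x)
  /-- (C2): `x ⊙ y` is defined iff `x' ≤ y`. -/
  odot_defined : ∀ x y, (odot x y).isSome ↔ le (compl x) y
  /-- (C2): partial commutative monoid. -/
  odot_comm : ∀ x y, odot x y = odot y x
  odot_assoc : ∀ x y z, (odot x y).bind (fun u => odot u z) = (odot y z).bind (fun v => odot x v)
  odot_one : ∀ x, odot x one = some x
  one_odot : ∀ x, odot one x = some x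
  /-- (C2): `z' ≤ x ≤ y` implies `x ⊙ z ≤ y ⊙ z`. -/
  odot_mono : ∀ x y z a b, le (compl z) x → le x y →
    odot x z = some a → odot y z = some b → le a b
  /-- (C3): unsharp adjointness. -/
  adjoint : ∀ x y z,
    setLE le (lcone le (odotLSet odot (ucone le {x, compl y}) y))
      (ucone le (lcone le {y, z})) ↔
    setLE le (lcone le (ucone le {x, compl y})) (ucone le (imp y z))
  /-- (C4) -/
  imp_zero : ∀ x, imp x zero = {compl x}

/-- Divisibility: `x ≤ y` implies `y ⊙ (y → x) = L(x)`. -/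
def CURPDivisible (le : E → E → Prop) (odot : E → E → Option E)
    (imp : E → E → Set E) : Prop :=
  ∀ x y, le x y → odotRSet odot y (imp y x) = lcone le {x}

/-- Pseudoeffect algebra axioms (P1)-(P4); `x̄ = lc x`, `x̃ = rc x`. -/
structure IsPEA (add : E → E → Option E) (lc rc : E → E) (zero one : E) : Prop where
  /-- (P1): if `x + y` is defined then `u + x = x + y` for some `u` … -/
  exists_left : ∀ x y z, add x y = some z → ∃ u, add u x = some z
  /-- (P1): … and `y + w = x + y` for some `w`. -/
  exists_right : ∀ x y z, add x y = some z → ∃ w, add y w = some z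
  /-- (P2) -/
  assoc : ∀ x y z, (add x y).bind (fun u => add u z) = (add y z).bind (fun v => add x v)
  /-- (P3): `x̄` is the unique `u` with `u + x = 1`. -/
  lc_iff : ∀ x u, add u x = some one ↔ u = lc x
  /-- (P3): `x̃` is the unique `w` with `x + w = 1`. -/
  rc_iff : ∀ x w, add x w = some one ↔ w = rc x
  /-- (P4) -/
  one_add : ∀ x y, add one x = some y → x = zero
  add_one : ∀ x y, add x one = some y → x = zero

/-- A pseudoeffect algebra is good if `(x̄ + ȳ)˜ = (x̃ + ỹ)‾` whenever `x̃ ≤ y`. -/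
def Good (add : E → E → Option E) (lc rc : E → E) : Prop :=
  ∀ x y, eaLe add (rc x) y →
    (add (lc x) (lc y)).map rc = (add (rc x) (rc y)).map lc

/-- A monotonous pseudoeffect algebra. -/
def PEAMonotonous (add : E → E → Option E) (lc rc : E → E) : Prop :=
  (∀ (x : E) (A B : Set E), A.Nonempty → B.Nonempty →
    (∀ a ∈ A ∪ B, eaLe add a (lc x)) →
    setLE (eaLe add) (lcone (eaLe add) A) (ucone (eaLe add) B) →
    setLE (eaLe add) (lcone (eaLe add) (addRSet add A x))
      (ucone (eaLe add) (addRSet add B x))) ∧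
  (∀ (x : E) (A B : Set E), A.Nonempty → B.Nonempty →
    (∀ a ∈ A ∪ B, eaLe add a (rc x)) →
    setLE (eaLe add) (lcone (eaLe add) A) (ucone (eaLe add) B) →
    setLE (eaLe add) (lcone (eaLe add) (addLSet add x A))
      (ucone (eaLe add) (addLSet add x B)))

/-- The multiplication `x ⊙ y := (x̄ + ȳ)˜` derived from a pseudoeffect algebra. -/
def peaOdot (add : E → E → Option E) (lc rc : E → E) (x y : E) : Option E :=
  (add (lc x) (lc y)).map rc

/-- The implication `x → y := x̄ + L(x,y)` derived from a pseudoeffect algebra. -/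
def peaImp (add : E → E → Option E) (lc : E → E) (x y : E) : Set E :=
  {z | ∃ c ∈ lcone (eaLe add) {x, y}, add (lc x) c = some z}

/-- The implication `x ⇝ y := L(x,y) + x̃` derived from a pseudoeffect algebra. -/
def peaImpW (add : E → E → Option E) (rc : E → E) (x y : E) : Set E :=
  {z | ∃ c ∈ lcone (eaLe add) {x, y}, add c (rc x) = some z}

/-- Unsharp residuated poset, axioms (R1)-(R7); `x̄ = lc x`, `x̃ = rc x`. -/
structure IsURP (le : E → E → Prop) (odot : E → E → Option E)
    (imp impW : E → E → Set E) (lc rc : E → E) (zero one : E) : Prop where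
  /-- (R1): bounded poset. -/
  le_refl : ∀ x, le x x
  le_antisymm : ∀ x y, le x y → le y x → x = y
  le_trans : ∀ x y z, le x y → le y z → le x z
  zero_le : ∀ x, le zero x
  le_one : ∀ x, le x one
  /-- (R2) -/
  rc_lc : ∀ x, rc (lc x) = x
  lc_rc : ∀ x, lc (rc x) = x
  lc_antitone : ∀ x y, le x y → le (lc y) (lc x)
  rc_antitone : ∀ x y, le x y → le (rc y) (rc x)
  /-- (R3): `x ⊙ y` is defined iff `x̃ ≤ y`. -/
  odot_defined : ∀ x y, (odot x y).isSome ↔ le (rc x) y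
  /-- (R3): partial monoid. -/
  odot_assoc : ∀ x y z, (odot x y).bind (fun u => odot u z) = (odot y z).bind (fun v => odot x v)
  odot_one : ∀ x, odot x one = some x
  one_odot : ∀ x, odot one x = some x
  /-- (R3): `z̄ ≤ x ≤ y` implies `x ⊙ z ≤ y ⊙ z`. -/
  odot_rmono : ∀ x y z a b, le (lc z) x → le x y →
    odot x z = some a → odot y z = some b → le a b
  /-- (R3): `z̃ ≤ x ≤ y` implies `z ⊙ x ≤ z ⊙ y`. -/
  odot_lmono : ∀ x y z a b, le (rc z) x → le x y →
    odot z x = some a → odot z y = some b → le a b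
  /-- (R4) -/
  adjoint_r : ∀ x y z,
    setLE le (lcone le (odotLSet odot (ucone le {x, lc y}) y))
      (ucone le (lcone le {y, z})) ↔
    setLE le (lcone le (ucone le {x, lc y})) (ucone le (imp y z))
  /-- (R5) -/
  adjoint_l : ∀ x y z,
    setLE le (lcone le (odotRSet odot y (ucone le {x, rc y})))
      (ucone le (lcone le {y, z})) ↔
    setLE le (lcone le (ucone le {x, rc y})) (ucone le (impW y z))
  /-- (R6) -/
  imp_zero : ∀ x, imp x zero = {lc x}
  impW_zero : ∀ x, impW x zero = {rc x}
  /-- (R7) -/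
  compat : ∀ x y, (odot (lc x) (lc y)).map rc = (odot (rc x) (rc y)).map lc

namespace IsEffectAlgebra

variable {add : E → E → Option E} {compl : E → E} {zero one : E}
  (h : IsEffectAlgebra add compl zero one)
include h

theorem add_assoc_of_some {x y z u w : E} (hxy : add x y = some u) (huz : add u z = some w) :
    ∃ v, add y z = some v ∧ add x v = some w := by
  have hassoc := h.assoc x y z
  rw [hxy, Option.bind_some, huz] at hassoc
  exact Option.bind_eq_some_iff.mp hassoc.symm

theorem add_assoc_of_some' {x y z v w : E} (hyz : add y z = some v) (hxv : add x v = some w) :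
    ∃ u, add x y = some u ∧ add u z = some w := by
  rw [h.comm] at hyz hxv
  obtain ⟨u, hyx, hzu⟩ := h.add_assoc_of_some hyz hxv
  exact ⟨u, by rwa [h.comm], by rwa [h.comm]⟩

theorem add_compl_self (x : E) : add x (compl x) = some one :=
  (h.compl_iff x (compl x)).mpr rfl

theorem compl_compl (x : E) : compl (compl x) = x :=
  ((h.compl_iff (compl x) x).mp (by rw [h.comm]; exact h.add_compl_self x)).symm

theorem add_compl_of_add {a b d : E} (hab : add a b = some d) :
    add b (compl d) = some (compl a) := by
  obtain ⟨v, hbv, hav⟩ := h.add_assoc_of_some hab (h.add_compl_self d)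
  rwa [← (h.compl_iff a v).mp hav]

theorem add_left_cancel {a b c d : E} (hab : add a b = some d) (hac : add a c = some d) :
    b = c := by
  have hb := h.add_compl_of_add (h.add_compl_of_add hab)
  have hc := h.add_compl_of_add (h.add_compl_of_add hac)
  rw [h.compl_compl] at hb hc
  rw [← h.compl_compl b, ← h.compl_compl c, Option.some_injective _ (hb.symm.trans hc)]

theorem compl_one : compl one = zero :=
  h.one_add _ _ (h.add_compl_self one)

theorem add_zero (x : E) : add x zero = some x := by
  have hone : add one zero = some one := (h.compl_iff one zero).mpr h.compl_one.symm
  have hx : add (compl x) x = some one := by rw [h.comm]; exact h.add_compl_self x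
  obtain ⟨v, hv, hxv⟩ := h.add_assoc_of_some hx hone
  rwa [(h.compl_iff (compl x) v).mp hxv, h.compl_compl] at hv

theorem zero_add (x : E) : add zero x = some x := by
  rw [h.comm]; exact h.add_zero x

theorem le_refl (x : E) : eaLe add x x := ⟨zero, h.add_zero x⟩

theorem zero_le (x : E) : eaLe add zero x := ⟨x, h.zero_add x⟩

theorem le_one (x : E) : eaLe add x one := ⟨compl x, h.add_compl_self x⟩

theorem le_trans {x y z : E} (hxy : eaLe add x y) (hyz : eaLe add y z) : eaLe add x z := by
  obtain ⟨a, ha⟩ := hxy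
  obtain ⟨b, hb⟩ := hyz
  obtain ⟨c, -, hc⟩ := h.add_assoc_of_some ha hb
  exact ⟨c, hc⟩

theorem eq_zero_of_add_eq_zero {a b : E} (hab : add a b = some zero) : a = zero ∧ b = zero := by
  obtain ⟨v, hbv, -⟩ := h.add_assoc_of_some hab (h.zero_add one)
  have hb : b = zero := h.one_add b v (by rwa [h.comm])
  rw [hb, h.add_zero] at hab
  exact ⟨Option.some_injective _ hab, hb⟩

theorem le_antisymm {x y : E} (hxy : eaLe add x y) (hyx : eaLe add y x) : x = y := by
  obtain ⟨a, ha⟩ := hxy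
  obtain ⟨b, hb⟩ := hyx
  obtain ⟨c, hab, hc⟩ := h.add_assoc_of_some ha hb
  obtain rfl : c = zero := h.add_left_cancel hc (h.add_zero x)
  rw [(h.eq_zero_of_add_eq_zero hab).1, h.add_zero] at ha
  exact Option.some_injective _ ha

theorem compl_le_compl {x y : E} (hxy : eaLe add x y) : eaLe add (compl y) (compl x) := by
  obtain ⟨z, hz⟩ := hxy
  exact ⟨z, by rw [h.comm]; exact h.add_compl_of_add hz⟩

theorem compl_le_compl_iff {x y : E} : eaLe add (compl y) (compl x) ↔ eaLe add x y :=
  ⟨fun hxy => by simpa only [h.compl_compl] using h.compl_le_compl hxy, h.compl_le_compl⟩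

theorem le_compl_of_add {x y z : E} (hxy : add x y = some z) : eaLe add x (compl y) := by
  have hzx := h.add_compl_of_add (h.add_compl_of_add hxy)
  rw [h.compl_compl] at hzx
  exact ⟨compl z, by rw [h.comm]; exact hzx⟩

theorem exists_add_of_le_compl {x y : E} (hxy : eaLe add x (compl y)) : ∃ z, add x y = some z := by
  obtain ⟨w, hw⟩ := hxy
  have hy : add (compl y) y = some one := by rw [h.comm]; exact h.add_compl_self y
  obtain ⟨v, hwy, hxv⟩ := h.add_assoc_of_some hw hy
  rw [(h.compl_iff x v).mp hxv, h.comm] at hwy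
  obtain ⟨z, hz, -⟩ := h.add_assoc_of_some' hwy (h.add_compl_self x)
  exact ⟨z, hz⟩

theorem isSome_add_iff {x y : E} : (add x y).isSome ↔ eaLe add x (compl y) := by
  rw [Option.isSome_iff_exists]
  exact ⟨fun ⟨_, hz⟩ => h.le_compl_of_add hz, h.exists_add_of_le_compl⟩

theorem add_le_add_left {a b x u v : E} (hab : eaLe add a b) (hu : add x a = some u)
    (hv : add x b = some v) : eaLe add u v := by
  obtain ⟨c, hc⟩ := hab
  obtain ⟨u', hu', hv'⟩ := h.add_assoc_of_some' hc hv
  rw [hu, Option.some_inj] at hu'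
  exact ⟨c, hu' ▸ hv'⟩

theorem add_compl_of_add_compl {y a v : E} (hv : add (compl y) a = some v) :
    add (compl y) (compl v) = some (compl a) := by
  have hav := h.add_compl_of_add hv
  rw [h.compl_compl] at hav
  rw [h.comm]
  exact h.add_compl_of_add hav

theorem compl_involutive : Function.Involutive compl := h.compl_compl

theorem mem_image_compl {s : E} {S : Set E} : s ∈ compl '' S ↔ compl s ∈ S := by
  rw [h.compl_involutive.image_eq_preimage_symm, Set.mem_preimage]

theorem isSome_eaOdot_iff (x y : E) :
    (eaOdot add compl x y).isSome ↔ eaLe add (compl x) y := by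
  rw [eaOdot, Option.isSome_map, h.isSome_add_iff, h.compl_compl]

theorem eaOdot_comm (x y : E) : eaOdot add compl x y = eaOdot add compl y x := by
  rw [eaOdot, eaOdot, h.comm]

theorem eaOdot_assoc (x y z : E) :
    (eaOdot add compl x y).bind (fun u => eaOdot add compl u z) =
      (eaOdot add compl y z).bind (fun v => eaOdot add compl x v) := by
  simp only [eaOdot, Option.bind_map, Function.comp_def, h.compl_compl]
  simpa only [Option.map_bind, Function.comp_def] using
    congrArg (Option.map compl) (h.assoc (compl x) (compl y) (compl z))

theorem eaOdot_one (x : E) : eaOdot add compl x one = some x := by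
  rw [eaOdot, h.compl_one, h.add_zero, Option.map_some, h.compl_compl]

theorem eaOdot_mono {x y z a b : E} (hxy : eaLe add x y) (ha : eaOdot add compl x z = some a)
    (hb : eaOdot add compl y z = some b) : eaLe add a b := by
  obtain ⟨p, hp, rfl⟩ := Option.map_eq_some_iff.mp ha
  obtain ⟨q, hq, rfl⟩ := Option.map_eq_some_iff.mp hb
  rw [h.comm] at hp hq
  exact h.compl_le_compl (h.add_le_add_left (h.compl_le_compl hxy) hq hp)

theorem lcone_pair_zero (x : E) : lcone (eaLe add) {x, zero} = {zero} := by
  ext c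
  refine ⟨fun hc => h.le_antisymm (hc zero (by simp)) (h.zero_le c), ?_⟩
  rintro rfl u -
  exact h.zero_le u

theorem eaImp_zero (x : E) : eaImp add compl x zero = {compl x} := by
  simp [eaImp, addLSet, h.lcone_pair_zero, h.add_zero, eq_comm]

theorem image_compl_image_compl (S : Set E) : compl '' (compl '' S) = S := by
  rw [Set.image_image]
  simp only [h.compl_compl, Set.image_id']

theorem ucone_image_compl (S : Set E) :
    ucone (eaLe add) (compl '' S) = compl '' lcone (eaLe add) S := by
  ext s
  rw [h.mem_image_compl]
  simp only [ucone, lcone, Set.mem_ofPred_eq, Set.forall_mem_image]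
  refine forall₂_congr fun t _ => ?_
  rw [← h.compl_le_compl_iff, h.compl_compl]

theorem lcone_image_compl (S : Set E) :
    lcone (eaLe add) (compl '' S) = compl '' ucone (eaLe add) S := by
  ext s
  rw [h.mem_image_compl]
  simp only [ucone, lcone, Set.mem_ofPred_eq, Set.forall_mem_image]
  refine forall₂_congr fun t _ => ?_
  rw [← h.compl_le_compl_iff, h.compl_compl]

theorem setLE_image_compl_iff {S T : Set E} :
    setLE (eaLe add) (compl '' S) (compl '' T) ↔ setLE (eaLe add) T S := by
  simp only [setLE, Set.forall_mem_image, h.compl_le_compl_iff]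
  exact ⟨fun H a ha b hb => H hb ha, fun H a ha b hb => H b hb a ha⟩

theorem setLE_lcone_ucone_image_compl_iff {S T : Set E} :
    setLE (eaLe add) (lcone (eaLe add) (compl '' T)) (ucone (eaLe add) (compl '' S)) ↔
      setLE (eaLe add) (lcone (eaLe add) S) (ucone (eaLe add) T) := by
  rw [h.lcone_image_compl, h.ucone_image_compl, h.setLE_image_compl_iff]

theorem odotLSet_image_compl (A : Set E) (y : E) :
    odotLSet (eaOdot add compl) (compl '' A) y = compl '' addLSet add (compl y) A := by
  ext w
  constructor
  · rintro ⟨_, ⟨t, ht, rfl⟩, hw⟩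
    rw [eaOdot, h.compl_compl, h.comm] at hw
    obtain ⟨v, hv, rfl⟩ := Option.map_eq_some_iff.mp hw
    exact ⟨v, ⟨t, ht, hv⟩, rfl⟩
  · rintro ⟨v, ⟨t, ht, hv⟩, rfl⟩
    exact ⟨compl t, ⟨t, ht, rfl⟩, by rw [eaOdot, h.compl_compl, h.comm, hv, Option.map_some]⟩

theorem addLSet_compl_image_compl_addLSet {y : E} {S : Set E} (hS : ∀ a ∈ S, eaLe add a y) :
    addLSet add (compl y) (compl '' addLSet add (compl y) S) = compl '' S := by
  ext w
  constructor
  · rintro ⟨_, ⟨v, ⟨a, ha, hav⟩, rfl⟩, hw⟩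
    rw [h.add_compl_of_add_compl hav, Option.some_inj] at hw
    exact ⟨a, ha, hw⟩
  · rintro ⟨a, ha, rfl⟩
    obtain ⟨v, hv⟩ := h.exists_add_of_le_compl (h.compl_le_compl (hS a ha))
    exact ⟨compl v, ⟨v, ⟨a, ha, hv⟩, rfl⟩, h.add_compl_of_add_compl hv⟩

/- Monotonicity with `x := y'`, applied to `compl '' (y' + S)` and `T`: on `[0, y]` the map
`a ↦ (y' + a)'` is an involution, so `y' + compl '' (y' + S) = compl '' S`. -/
theorem setLE_lcone_ucone_addLSet (hMon : Monotonous add compl) {y : E} {S T : Set E}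
    (hS : S.Nonempty) (hT : T.Nonempty) (hSy : ∀ a ∈ S, eaLe add a y)
    (hTy : ∀ a ∈ T, eaLe add a y)
    (hST : setLE (eaLe add) (lcone (eaLe add) (compl '' addLSet add (compl y) S))
      (ucone (eaLe add) T)) :
    setLE (eaLe add) (lcone (eaLe add) (compl '' S))
      (ucone (eaLe add) (addLSet add (compl y) T)) := by
  have hS' : (compl '' addLSet add (compl y) S).Nonempty := by
    obtain ⟨a, ha⟩ := hS
    obtain ⟨v, hv⟩ := h.exists_add_of_le_compl (h.compl_le_compl (hSy a ha))
    exact ⟨compl v, v, ⟨a, ha, hv⟩, rfl⟩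
  have hbound : ∀ a ∈ compl '' addLSet add (compl y) S ∪ T, eaLe add a (compl (compl y)) := by
    rw [h.compl_compl]
    rintro a (⟨v, ⟨b, -, hv⟩, rfl⟩ | ha)
    · exact h.compl_le_compl_iff.mp (by rw [h.compl_compl]; exact ⟨b, hv⟩)
    · exact hTy a ha
  simpa only [h.addLSet_compl_image_compl_addLSet hSy] using hMon (compl y) _ T hS' hT hbound hST

theorem setLE_lcone_ucone_addLSet_iff (hMon : Monotonous add compl) {y : E} {S T : Set E}
    (hS : S.Nonempty) (hT : T.Nonempty) (hSy : ∀ a ∈ S, eaLe add a y)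
    (hTy : ∀ a ∈ T, eaLe add a y) :
    setLE (eaLe add) (lcone (eaLe add) (compl '' addLSet add (compl y) S))
        (ucone (eaLe add) T) ↔
      setLE (eaLe add) (lcone (eaLe add) (compl '' S))
        (ucone (eaLe add) (addLSet add (compl y) T)) := by
  refine ⟨h.setLE_lcone_ucone_addLSet hMon hS hT hSy hTy, fun hST => ?_⟩
  have hTS := h.setLE_lcone_ucone_image_compl_iff.mpr hST
  rw [h.image_compl_image_compl] at hTS
  simpa only [h.image_compl_image_compl] using
    h.setLE_lcone_ucone_image_compl_iff.mpr (h.setLE_lcone_ucone_addLSet hMon hT hS hTy hSy hTS)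

theorem lcone_pair_nonempty (a b : E) : (lcone (eaLe add) {a, b}).Nonempty :=
  ⟨zero, fun u _ => h.zero_le u⟩

theorem ucone_pair_compl (x y : E) :
    ucone (eaLe add) {x, compl y} = compl '' lcone (eaLe add) {compl x, y} := by
  rw [← h.ucone_image_compl, Set.image_pair, h.compl_compl]

theorem adjoint (hMon : Monotonous add compl) (x y z : E) :
    setLE (eaLe add)
        (lcone (eaLe add) (odotLSet (eaOdot add compl) (ucone (eaLe add) {x, compl y}) y))
        (ucone (eaLe add) (lcone (eaLe add) {y, z})) ↔
      setLE (eaLe add) (lcone (eaLe add) (ucone (eaLe add) {x, compl y}))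
        (ucone (eaLe add) (eaImp add compl y z)) := by
  rw [h.ucone_pair_compl, h.odotLSet_image_compl, eaImp]
  exact h.setLE_lcone_ucone_addLSet_iff hMon (h.lcone_pair_nonempty _ _)
    (h.lcone_pair_nonempty _ _) (fun a ha => ha y (by simp)) (fun a ha => ha y (by simp))

theorem odotRSet_addLSet_compl {y : E} {C : Set E} (hC : ∀ c ∈ C, eaLe add c y) :
    odotRSet (eaOdot add compl) y (addLSet add (compl y) C) = C := by
  ext w
  constructor
  · rintro ⟨s, ⟨c, hc, hcs⟩, hw⟩
    rw [eaOdot, h.add_compl_of_add_compl hcs, Option.map_some, h.compl_compl,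
      Option.some_inj] at hw
    exact hw ▸ hc
  · intro hw
    obtain ⟨s, hs⟩ := h.exists_add_of_le_compl (h.compl_le_compl (hC w hw))
    exact ⟨s, ⟨w, hw, hs⟩, by
      rw [eaOdot, h.add_compl_of_add_compl hs, Option.map_some, h.compl_compl]⟩

theorem lcone_pair_of_le {x y : E} (hxy : eaLe add x y) :
    lcone (eaLe add) {y, x} = lcone (eaLe add) {x} := by
  ext c
  simp only [lcone, Set.mem_ofPred_eq, Set.mem_insert_iff, Set.mem_singleton_iff,
    forall_eq_or_imp, forall_eq]
  exact ⟨And.right, fun hcx => ⟨h.le_trans hcx hxy, hcx⟩⟩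

theorem divisible : CURPDivisible (eaLe add) (eaOdot add compl) (eaImp add compl) := by
  intro x y hxy
  rw [eaImp, h.lcone_pair_of_le hxy, h.odotRSet_addLSet_compl]
  exact fun c hc => h.le_trans (hc x rfl) hxy

end IsEffectAlgebra

/-- Theorem 1 of the paper: a monotonous effect algebra becomes a divisible
commutative unsharp residuated poset via `x ⊙ y := (x' + y')'` and
`x → y := x' + L(x,y)`. -/
theorem stmt0 (add : E → E → Option E) (compl : E → E) (zero one : E)
    (hEA : IsEffectAlgebra add compl zero one)
    (hMon : Monotonous add compl) :
    IsCURP (eaLe add) (eaOdot add compl) (eaImp add compl) compl zero one ∧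
    CURPDivisible (eaLe add) (eaOdot add compl) (eaImp add compl) :=
  ⟨{ le_refl := hEA.le_refl
     le_antisymm := fun _ _ => hEA.le_antisymm
     le_trans := fun _ _ _ => hEA.le_trans
     zero_le := hEA.zero_le
     le_one := hEA.le_one
     compl_compl := hEA.compl_compl
     compl_antitone := fun _ _ => hEA.compl_le_compl
     odot_defined := hEA.isSome_eaOdot_iff
     odot_comm := hEA.eaOdot_comm
     odot_assoc := hEA.eaOdot_assoc
     odot_one := hEA.eaOdot_one
     one_odot := fun x => (hEA.eaOdot_comm one x).trans (hEA.eaOdot_one x)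
     odot_mono := fun _ _ _ _ _ _ => hEA.eaOdot_mono
     adjoint := hEA.adjoint hMon
     imp_zero := hEA.eaImp_zero },
    hEA.divisible⟩

end Paper
end

section
/- Let E = (E,+,',0,1) be a monotonous effect algebra with induced order ≤, and define x⊙y := (x'+y')' (defined iff x' ≤ y). For all a,b,c ∈ E: if L(U(a,b')⊙b) ≤ UL(b,c), then LU(a,b') ≤ U(b' + L(b,c)). -/
namespace Paper

variable {E : Type*}

section Aux

variable {add : E → E → Option E} {compl : E → E} {zero one : E}
variable (hEA : IsEffectAlgebra add compl zero one)
include hEA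

lemma ea_add_compl (x : E) : add x (compl x) = some one :=
  (hEA.compl_iff x (compl x)).mpr rfl

lemma ea_compl_compl (x : E) : compl (compl x) = x := by
  have h : add (compl x) x = some one := by
    rw [hEA.comm]; exact ea_add_compl hEA x
  exact ((hEA.compl_iff (compl x) x).mp h).symm

/-- Rearranged associativity. -/
lemma ea_assoc' {x y z u v : E} (h1 : add x y = some u) (h2 : add u z = some v) :
    ∃ w, add y z = some w ∧ add x w = some v := by
  have h := hEA.assoc x y z
  rw [h1] at h
  simp only [Option.bind_some] at h
  rw [h2] at h
  rcases hw : add y z with _ | w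
  · rw [hw] at h; simp at h
  · rw [hw] at h; exact ⟨w, rfl, h.symm⟩

lemma ea_compl_one : compl one = zero := by
  exact hEA.one_add _ _ (ea_add_compl hEA one)

lemma ea_add_zero (x : E) : add x zero = some x := by
  have key : ∀ y : E, add (compl y) zero = some (compl y) := by
    intro y
    have h1 : add y (compl y) = some one := ea_add_compl hEA y
    have h2 : add one zero = some one := by
      rw [← ea_compl_one hEA]; exact ea_add_compl hEA one
    obtain ⟨w, hw1, hw2⟩ := ea_assoc' hEA h1 h2
    rwa [(hEA.compl_iff y w).mp hw2] at hw1
  have := key (compl x)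
  rwa [ea_compl_compl hEA x] at this

lemma ea_zero_le (x : E) : eaLe add zero x :=
  ⟨x, by rw [hEA.comm]; exact ea_add_zero hEA x⟩

lemma ea_le_one (x : E) : eaLe add x one :=
  ⟨compl x, ea_add_compl hEA x⟩

lemma ea_compl_antitone {x y : E} (h : eaLe add x y) :
    eaLe add (compl y) (compl x) := by
  obtain ⟨z, hz⟩ := h
  obtain ⟨w, hw1, hw2⟩ := ea_assoc' hEA hz (ea_add_compl hEA y)
  exact ⟨z, by rw [hEA.comm, ← (hEA.compl_iff x w).mp hw2]; exact hw1⟩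

end Aux

/-- One direction of unsharp adjointness in a monotonous effect algebra:
`L(U(a,b') ⊙ b) ≤ UL(b,c)` implies `LU(a,b') ≤ U(b' + L(b,c))`. -/
theorem stmt1 (add : E → E → Option E) (compl : E → E) (zero one : E)
    (hEA : IsEffectAlgebra add compl zero one)
    (hMon : Monotonous add compl) :
    ∀ a b c : E,
      setLE (eaLe add)
        (lcone (eaLe add) (odotLSet (eaOdot add compl) (ucone (eaLe add) {a, compl b}) b))
        (ucone (eaLe add) (lcone (eaLe add) {b, c})) →
      setLE (eaLe add)
        (lcone (eaLe add) (ucone (eaLe add) {a, compl b}))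
        (ucone (eaLe add) (addLSet add (compl b) (lcone (eaLe add) {b, c}))) := by
  intro a b c h
  set A : Set E := odotLSet (eaOdot add compl) (ucone (eaLe add) {a, compl b}) b with hA
  set B : Set E := lcone (eaLe add) {b, c} with hB
  have hAne : A.Nonempty := by
    refine ⟨compl (compl b), one, ?_, ?_⟩
    · intro y _; exact ea_le_one hEA y
    · show (add (compl one) (compl b)).map compl = some (compl (compl b))
      rw [ea_compl_one hEA, hEA.comm, ea_add_zero hEA]
      rfl
  have hBne : B.Nonempty := by
    exact ⟨zero, fun y _ => ea_zero_le hEA y⟩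
  have hbound : ∀ w ∈ A ∪ B, eaLe add w (compl (compl b)) := by
    rw [ea_compl_compl hEA]
    rintro w (⟨s, _, hsw⟩ | hw)
    · obtain ⟨u, hu, hwu⟩ := Option.map_eq_some_iff.mp hsw
      have hle : eaLe add (compl b) u := ⟨compl s, by rw [hEA.comm]; exact hu⟩
      have := ea_compl_antitone hEA hle
      rw [ea_compl_compl hEA, hwu] at this
      exact this
    · exact hw b (Set.mem_insert b {c})
  have R := hMon (compl b) A B hAne hBne hbound h
  intro p hp q hq
  refine R p ?_ q hq
  intro z hz
  obtain ⟨w, ⟨s, hs, hsw⟩, hbw⟩ := hz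
  obtain ⟨u, hu, hwu⟩ := Option.map_eq_some_iff.mp hsw
  have hbws : add (compl b) w = some s := by
    obtain ⟨v, hv1, hv2⟩ := ea_assoc' hEA hu (ea_add_compl hEA u)
    have : v = s := by
      have := (hEA.compl_iff (compl s) v).mp hv2
      rwa [ea_compl_compl hEA] at this
    rw [← hwu, ← this]; exact hv1
  have hzs : z = s := by
    rw [hbw] at hbws; exact Option.some_injective _ hbws
  rw [hzs]
  exact hp s hs

end Paper
end

section
/- Let (E,+,',0,1) be a monotonous effect algebra with induced order ≤, let a ∈ E, and let A,B be nonempty subsets of E with a' ≤ A ∪ B and L(A) ≤ U(B). Then L(a⊙A) ≤ U(a⊙B), where x⊙y := (x'+y')' (defined iff x' ≤ y) and a⊙A := {a⊙x : x ∈ A}. -/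
namespace Paper

variable {E : Type*}

/-- Lemma 5 of the paper: in a monotonous effect algebra, if `a' ≤ A ∪ B` and
`L(A) ≤ U(B)` for nonempty `A`, `B`, then `L(a ⊙ A) ≤ U(a ⊙ B)`. -/
theorem stmt4 (add : E → E → Option E) (compl : E → E) (zero one : E)
    (hEA : IsEffectAlgebra add compl zero one)
    (hMon : Monotonous add compl) :
    ∀ (a : E) (A B : Set E), A.Nonempty → B.Nonempty →
      (∀ x ∈ A ∪ B, eaLe add (compl a) x) →
      setLE (eaLe add) (lcone (eaLe add) A) (ucone (eaLe add) B) →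
      setLE (eaLe add)
        (lcone (eaLe add) (odotRSet (eaOdot add compl) a A))
        (ucone (eaLe add) (odotRSet (eaOdot add compl) a B)) := by
  intro a A B hA hB hcov hLU
  have hxx' : ∀ x : E, add x (compl x) = some one := fun x => (hEA.compl_iff x _).2 rfl
  have hx'x : ∀ x : E, add (compl x) x = some one := fun x => (hEA.comm _ _).trans (hxx' x)
  have cc : ∀ x : E, compl (compl x) = x :=
    fun x => ((hEA.compl_iff (compl x) x).1 (hx'x x)).symm
  have anti : ∀ x y : E, eaLe add x y → eaLe add (compl y) (compl x) := by
    rintro x y ⟨z, hz⟩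
    have h1 : (some one : Option E) = (add z (compl y)).bind (fun v => add x v) := by
      have h := hEA.assoc x z (compl y)
      rw [hz] at h
      rw [Option.bind_some, hxx'] at h
      exact h
    cases hw : add z (compl y) with
    | none => rw [hw] at h1; simp at h1
    | some w =>
      rw [hw] at h1
      rw [Option.bind_some] at h1
      have hw' : w = compl x := (hEA.compl_iff x w).1 h1.symm
      exact ⟨z, by rw [hEA.comm, hw] ; rw [hw']⟩
  -- apply monotonicity with x = a', A* = B', B* = A'
  have H := hMon (compl a) (compl '' B) (compl '' A) (hB.image compl) (hA.image compl)
    (by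
      rintro c hc
      rcases hc with ⟨b, hb, rfl⟩ | ⟨s, hs, rfl⟩
      · exact anti _ _ (hcov b (Or.inr hb))
      · exact anti _ _ (hcov s (Or.inl hs)))
    (by
      intro x hx y hy
      have hyA : compl y ∈ lcone (eaLe add) A := by
        intro s hs
        have := anti _ _ (hy (compl s) ⟨s, hs, rfl⟩)
        rwa [cc] at this
      have hxB : compl x ∈ ucone (eaLe add) B := by
        intro b hb
        have := anti _ _ (hx (compl b) ⟨b, hb, rfl⟩)
        rwa [cc] at this
      have := anti _ _ (hLU (compl y) hyA (compl x) hxB)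
      rwa [cc, cc] at this)
  intro p hp q hq
  have hq' : compl q ∈ lcone (eaLe add) (addLSet add (compl a) (compl '' B)) := by
    rintro z ⟨c, ⟨b, hb, rfl⟩, hz⟩
    have hmem : compl z ∈ odotRSet (eaOdot add compl) a B := by
      exact ⟨b, hb, by simp [eaOdot, hz]⟩
    have := anti _ _ (hq (compl z) hmem)
    rwa [cc] at this
  have hp' : compl p ∈ ucone (eaLe add) (addLSet add (compl a) (compl '' A)) := by
    rintro z ⟨c, ⟨s, hs, rfl⟩, hz⟩
    have hmem : compl z ∈ odotRSet (eaOdot add compl) a A := by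
      exact ⟨s, hs, by simp [eaOdot, hz]⟩
    have := anti _ _ (hp (compl z) hmem)
    rwa [cc] at this
  have := anti _ _ (H (compl q) hq' (compl p) hp')
  rwa [cc, cc] at this

end Paper
end

section
/- Let E = (E,+,',0,1) be an effect algebra with induced order ≤ satisfying the following two conditions for all x,y ∈ E and all nonempty subsets A of E: (i) if A ≤ y' and x ∈ L(y+A) then there exist z ∈ L(y) and u ∈ L(A) with z+u = x; (ii) if A ≤ y' and x ∈ U(y+A) then there exist z ∈ U(y) and u ∈ U(A) with z+u = x. Then E is monotonous. -/
namespace Paper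

variable {E : Type*}

private lemma bind_eq_some' {o : Option E} {f : E → Option E} {c : E}
    (h : o.bind f = some c) : ∃ a, o = some a ∧ f a = some c := by
  cases o with
  | none => simp at h
  | some a => exact ⟨a, rfl, h⟩

private lemma ea_le_trans (add : E → E → Option E)
    (assoc : ∀ x y z, (add x y).bind (fun u => add u z)
      = (add y z).bind (fun v => add x v))
    {a b c : E} (hab : eaLe add a b) (hbc : eaLe add b c) : eaLe add a c := by
  obtain ⟨s, hs⟩ := hab
  obtain ⟨t, ht⟩ := hbc
  have h : (add a s).bind (fun u => add u t) = some c := by rw [hs]; exact ht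
  rw [assoc] at h
  obtain ⟨v, _, hv⟩ := bind_eq_some' h
  exact ⟨v, hv⟩

/-- Monotonicity of addition: if `a ≤ c`, `b ≤ d` and `a+b`, `c+d` are defined,
then `a+b ≤ c+d`. -/
private lemma ea_add_mono (add : E → E → Option E)
    (comm : ∀ x y, add x y = add y x)
    (assoc : ∀ x y z, (add x y).bind (fun u => add u z)
      = (add y z).bind (fun v => add x v))
    {a b c d p q : E} (hac : eaLe add a c) (hbd : eaLe add b d)
    (hp : add a b = some p) (hq : add c d = some q) : eaLe add p q := by
  obtain ⟨s, hs⟩ := hac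
  obtain ⟨t, ht⟩ := hbd
  -- q = (a+s)+d = a+(s+d)
  have h1 : (add a s).bind (fun u => add u d) = some q := by rw [hs]; exact hq
  rw [assoc] at h1
  obtain ⟨m, hm, ham⟩ := bind_eq_some' h1
  -- m = s + d = s + (b+t) = (s+b)+t
  have h2 : (add s b).bind (fun u => add u t) = some m := by
    rw [assoc, ht]; exact hm
  obtain ⟨k, hk, hkt⟩ := bind_eq_some' h2
  -- q = a + (k + t) = (a+k) + t
  have h3 : (add a k).bind (fun u => add u t) = some q := by
    rw [assoc, hkt]; exact ham
  obtain ⟨n, hn, hnt⟩ := bind_eq_some' h3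
  -- n = a + k = a + (s+b) = a + (b+s) = (a+b) + s = p + s
  have h4 : (add a b).bind (fun u => add u s) = some n := by
    rw [assoc, comm s b] at *
    rw [hk]; exact hn
  rw [hp] at h4
  rw [Option.bind_some] at h4
  exact ea_le_trans add assoc ⟨s, h4⟩ ⟨t, hnt⟩

/-- Lemma 6 of the paper: an effect algebra in which lower (resp. upper) bounds of
`y + A` decompose as sums of lower (resp. upper) bounds is monotonous. -/
theorem stmt5 (add : E → E → Option E) (compl : E → E) (zero one : E)
    (hEA : IsEffectAlgebra add compl zero one)
    (h1 : ∀ (x y : E) (A : Set E), A.Nonempty → (∀ a ∈ A, eaLe add a (compl y)) →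
      x ∈ lcone (eaLe add) (addLSet add y A) →
      ∃ z ∈ lcone (eaLe add) {y}, ∃ u ∈ lcone (eaLe add) A, add z u = some x)
    (h2 : ∀ (x y : E) (A : Set E), A.Nonempty → (∀ a ∈ A, eaLe add a (compl y)) →
      x ∈ ucone (eaLe add) (addLSet add y A) →
      ∃ z ∈ ucone (eaLe add) {y}, ∃ u ∈ ucone (eaLe add) A, add z u = some x) :
    Monotonous add compl := by
  intro x A B hA hB hle hLU p hp q hq
  have hAx : ∀ a ∈ A, eaLe add a (compl x) := fun a ha => hle a (Or.inl ha)
  have hBx : ∀ a ∈ B, eaLe add a (compl x) := fun a ha => hle a (Or.inr ha)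
  obtain ⟨z, hz, u, hu, hzu⟩ := h1 p x A hA hAx hp
  obtain ⟨z', hz', u', hu', hzu'⟩ := h2 q x B hB hBx hq
  have hzz' : eaLe add z z' :=
    ea_le_trans add hEA.assoc (hz x rfl) (hz' x rfl)
  have huu' : eaLe add u u' := hLU u hu u' hu'
  exact ea_add_mono add hEA.comm hEA.assoc hzz' huu' hzu hzu'

end Paper
end

section
/- Let E be the set of all subsets of {1,...,6} of even cardinality, with A + B := A ∪ B (defined iff A ∩ B = ∅) and A' := {1,...,6} \ A, forming an effect algebra whose induced order is set inclusion. For all A,B ∈ E, with A→B := A' + L(A,B) := {A' ∪ C : C ∈ E, C ⊆ A ∩ B}, one has A→B = {D ∈ E : A' ⊆ D ⊆ A' ∪ B}. -/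
namespace Paper

variable {E : Type*}

/-- The even-cardinality subsets of `{1,…,6}`. -/
def EvenSet : Type := {A : Finset (Fin 6) // Even A.card}

/-- `A + B := A ∪ B`, defined iff `A ∩ B = ∅`. -/
def evAdd (A B : EvenSet) : Option EvenSet :=
  if h : A.1 ∩ B.1 = ∅ then
    some ⟨A.1 ∪ B.1, by
      rw [Finset.card_union_of_disjoint (Finset.disjoint_iff_inter_eq_empty.mpr h)]
      exact A.2.add B.2⟩
  else none

/-- `A' := {1,…,6} \ A`. -/
def evCompl (A : EvenSet) : EvenSet :=
  ⟨Finset.univ \ A.1, by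
    obtain ⟨r, hr⟩ := A.2
    have h1 : A.1 ⊆ Finset.univ := Finset.subset_univ _
    have h2 : A.1.card ≤ 6 := by
      simpa using Finset.card_le_card h1
    rw [Finset.card_sdiff, Finset.inter_univ, Finset.card_univ, Fintype.card_fin]
    exact ⟨3 - r, by omega⟩⟩

def evZero : EvenSet := ⟨∅, by simp⟩

def evOne : EvenSet := ⟨Finset.univ, by
  rw [Finset.card_univ, Fintype.card_fin]; exact ⟨3, rfl⟩⟩

/-! The induced order is inclusion because the difference of two nested even sets is again even.
Hence `A' + C` with `C ⊆ A ∩ B` runs through exactly the sets between `A'` and `A' ∪ B`: such a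
`D` arises from `C = D \ A'`. -/

lemma even_card_sdiff_of_subset {α : Type*} [DecidableEq α] {s t : Finset α} (h : s ⊆ t)
    (hs : Even s.card) (ht : Even t.card) : Even (t \ s).card := by
  rw [Finset.card_sdiff_of_subset h, Nat.even_sub (Finset.card_le_card h)]
  exact iff_of_true ht hs

lemma evAdd_eq_some_iff {A B C : EvenSet} :
    evAdd A B = some C ↔ Disjoint A.1 B.1 ∧ C.1 = A.1 ∪ B.1 := by
  unfold evAdd
  split_ifs with h
  · constructor
    · rintro ⟨⟩
      exact ⟨Finset.disjoint_iff_inter_eq_empty.mpr h, rfl⟩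
    · rintro ⟨-, hC⟩
      exact congrArg some (Subtype.ext hC.symm)
  · simp only [false_iff, not_and]
    exact fun hd => absurd (Finset.disjoint_iff_inter_eq_empty.mp hd) h

lemma eaLe_evAdd_iff {X Y : EvenSet} : eaLe evAdd X Y ↔ X.1 ⊆ Y.1 := by
  simp only [eaLe, evAdd_eq_some_iff]
  constructor
  · rintro ⟨Z, -, hY⟩
    exact hY ▸ Finset.subset_union_left
  · intro h
    exact ⟨⟨Y.1 \ X.1, even_card_sdiff_of_subset h X.2 Y.2⟩, Finset.disjoint_sdiff,
      (Finset.union_sdiff_of_subset h).symm⟩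

lemma mem_eaImp_evAdd_iff {A B D : EvenSet} :
    D ∈ eaImp evAdd evCompl A B ↔
      ∃ C : EvenSet, C.1 ⊆ A.1 ∩ B.1 ∧ D.1 = (evCompl A).1 ∪ C.1 := by
  simp only [eaImp, addLSet, lcone, Set.mem_ofPred_eq, Set.mem_insert_iff,
    Set.mem_singleton_iff, forall_eq_or_imp, forall_eq, eaLe_evAdd_iff, evAdd_eq_some_iff,
    Finset.subset_inter_iff]
  refine exists_congr fun C => ⟨fun ⟨hC, _, hD⟩ => ⟨hC, hD⟩, fun ⟨hC, hD⟩ => ⟨hC, ?_, hD⟩⟩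
  exact Finset.sdiff_disjoint.mono_right hC.1

/-- In the effect algebra of even-cardinality subsets of `{1,…,6}`:
`A → B = {D ∈ E : A' ⊆ D ⊆ A' ∪ B}`. -/
theorem stmt9 :
    ∀ A B : EvenSet,
      eaImp evAdd evCompl A B
        = {D : EvenSet | (evCompl A).1 ⊆ D.1 ∧ D.1 ⊆ (evCompl A).1 ∪ B.1} := by
  intro A B
  ext D
  rw [mem_eaImp_evAdd_iff, Set.mem_ofPred_eq]
  constructor
  · rintro ⟨C, hC, hD⟩
    rw [hD]
    exact ⟨Finset.subset_union_left,
      Finset.union_subset_union_right (hC.trans Finset.inter_subset_right)⟩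
  · rintro ⟨hAD, hDB⟩
    have hDA : D.1 ⊆ (evCompl A).1 ∪ A.1 := by
      show D.1 ⊆ (Finset.univ \ A.1) ∪ A.1
      rw [Finset.sdiff_union_of_subset (Finset.subset_univ _)]
      exact Finset.subset_univ _
    exact ⟨⟨D.1 \ (evCompl A).1, even_card_sdiff_of_subset hAD (evCompl A).2 D.2⟩,
      Finset.subset_inter (sdiff_le_iff.mpr hDA) (sdiff_le_iff.mpr hDB),
      (Finset.union_sdiff_of_subset hAD).symm⟩

end Paper
end

section
/- Let C = (C,≤,⊙,→,',0,1) be a commutative unsharp residuated poset and define the partial operation x + y := (x'⊙y')' (defined if and only if x ≤ y'). Then (C,+,',0,1) is an effect algebra. -/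
namespace Paper

variable {E : Type*}

/-! Everything follows from two consequences of unsharp adjointness with `z = 0`, where (C4)
turns `U(y → 0)` into `U(y')`: `x' ⊙ x = 0`, and conversely `x ⊙ y = 0` forces `y = x'`.
Given these, (E3) and (E4) are immediate, while (E1) and (E2) are commutativity and
associativity of `⊙` transported along the involution `'`. -/

section Cones

variable {le : E → E → Prop} {S : Set E} {x : E}

theorem mem_lcone_ucone (hx : x ∈ S) : x ∈ lcone le (ucone le S) := fun _ hy => hy x hx

theorem mem_ucone_lcone (hx : x ∈ S) : x ∈ ucone le (lcone le S) := fun _ hy => hy x hx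

end Cones

theorem conj_assoc {f : E → E → Option E} {c : E → E} (hc : ∀ x, c (c x) = x)
    (hf : ∀ x y z, (f x y).bind (fun u => f u z) = (f y z).bind (fun v => f x v)) (x y z : E) :
    ((f (c x) (c y)).map c).bind (fun u => (f (c u) (c z)).map c) =
      ((f (c y) (c z)).map c).bind (fun v => (f (c x) (c v)).map c) := by
  calc _ = ((f (c x) (c y)).bind fun u => f u (c z)).map c := by
        simp only [Option.bind_map, Option.map_bind, Function.comp_def, hc]
    _ = ((f (c y) (c z)).bind fun v => f (c x) v).map c := by rw [hf]
    _ = _ := by simp only [Option.bind_map, Option.map_bind, Function.comp_def, hc]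

namespace IsCURP

variable {le : E → E → Prop} {odot : E → E → Option E} {imp : E → E → Set E}
  {compl : E → E} {zero one : E}

theorem le_compl_comm (h : IsCURP le odot imp compl zero one) {x y : E}
    (hxy : le x (compl y)) : le y (compl x) := by
  simpa only [h.compl_compl] using h.compl_antitone _ _ hxy

theorem compl_le_comm (h : IsCURP le odot imp compl zero one) {x y : E}
    (hxy : le (compl x) y) : le (compl y) x := by
  simpa only [h.compl_compl] using h.compl_antitone _ _ hxy

theorem compl_one (h : IsCURP le odot imp compl zero one) : compl one = zero :=
  h.le_antisymm _ _ (h.compl_le_comm (h.le_one _)) (h.zero_le _)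

theorem compl_zero (h : IsCURP le odot imp compl zero one) : compl zero = one := by
  rw [← h.compl_one, h.compl_compl]

theorem compl_le_of_odot_eq_some (h : IsCURP le odot imp compl zero one) {x y z : E}
    (hxy : odot x y = some z) : le (compl x) y :=
  (h.odot_defined x y).mp (Option.isSome_iff_exists.mpr ⟨z, hxy⟩)

theorem mem_ucone_imp_zero (h : IsCURP le odot imp compl zero one) {x t : E} :
    t ∈ ucone le (imp x zero) ↔ le (compl x) t := by
  simp [ucone, h.imp_zero]

theorem compl_odot_self (h : IsCURP le odot imp compl zero one) (x : E) :
    odot (compl x) x = some zero := by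
  obtain ⟨c, hc⟩ := Option.isSome_iff_exists.mp
    ((h.odot_defined _ _).mpr (by rw [h.compl_compl]; exact h.le_refl x))
  -- `U(0, x')` is `U(x') = U(x → 0)`, so the right side of (C3) holds trivially.
  have hadj : setLE le (lcone le (odotLSet odot (ucone le {zero, compl x}) x))
      (ucone le (lcone le {x, zero})) := by
    refine (h.adjoint zero x zero).mpr fun s hs t ht => hs t ?_
    rintro w (rfl | rfl)
    · exact h.zero_le t
    · exact h.mem_ucone_imp_zero.mp ht
  have hc_lower : c ∈ lcone le (odotLSet odot (ucone le {zero, compl x}) x) := by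
    rintro w ⟨s, hs, hsw⟩
    exact h.odot_mono _ s x c w (h.le_refl _) (hs _ (by simp)) hc hsw
  have hc_zero : le c zero := hadj c hc_lower zero (mem_ucone_lcone (by simp))
  rw [hc, h.le_antisymm c zero hc_zero (h.zero_le c)]

theorem eq_compl_of_odot_eq_zero (h : IsCURP le odot imp compl zero one) {x y : E}
    (hxy : odot x y = some zero) : y = compl x := by
  have hxy_le : le (compl x) y := h.compl_le_of_odot_eq_some hxy
  have hx_mem : x ∈ ucone le {x, compl y} := by
    rintro w (rfl | rfl)
    · exact h.le_refl _
    · exact h.compl_le_comm hxy_le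
  -- `0 = x ⊙ y` lies in `U(x, y') ⊙ y`, so the left side of (C3) holds trivially.
  have hadj : setLE le (lcone le (ucone le {x, compl y})) (ucone le (imp y zero)) := by
    refine (h.adjoint x y zero).mp fun s hs t _ => ?_
    exact h.le_trans _ _ _ (hs zero ⟨x, hx_mem, hxy⟩) (h.zero_le t)
  have hx_le : le x (compl y) :=
    hadj x (mem_lcone_ucone (by simp)) (compl y) (h.mem_ucone_imp_zero.mpr (h.le_refl _))
  exact h.le_antisymm _ _ (h.le_compl_comm hx_le) hxy_le

theorem add_eq_one_iff (h : IsCURP le odot imp compl zero one) (x u : E) :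
    (odot (compl x) (compl u)).map compl = some one ↔ u = compl x := by
  constructor
  · intro hxu
    obtain ⟨a, ha, ha_one⟩ := Option.map_eq_some_iff.mp hxu
    have ha_zero : a = zero := by rw [← h.compl_compl a, ha_one, h.compl_one]
    rw [ha_zero] at ha
    rw [← h.compl_compl u, h.eq_compl_of_odot_eq_zero ha, h.compl_compl]
  · rintro rfl
    rw [h.compl_compl, h.compl_odot_self, Option.map_some, h.compl_zero]

theorem eq_zero_of_one_add (h : IsCURP le odot imp compl zero one) {x y : E}
    (hxy : (odot (compl one) (compl x)).map compl = some y) : x = zero := by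
  obtain ⟨a, ha, -⟩ := Option.map_eq_some_iff.mp hxy
  have hx_one : compl x = one := by
    have := h.compl_le_of_odot_eq_some ha
    rw [h.compl_one, h.compl_zero] at this
    exact h.le_antisymm _ _ (h.le_one _) this
  rw [← h.compl_compl x, hx_one, h.compl_one]

end IsCURP

/-- Theorem 3 of the paper: a commutative unsharp residuated poset becomes an
effect algebra via `x + y := (x' ⊙ y')'` (defined iff `x ≤ y'`). -/
theorem stmt10 (le : E → E → Prop) (odot : E → E → Option E) (imp : E → E → Set E)
    (compl : E → E) (zero one : E)
    (h : IsCURP le odot imp compl zero one) :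
    IsEffectAlgebra (fun x y => (odot (compl x) (compl y)).map compl) compl zero one :=
  ⟨fun x y => by rw [h.odot_comm], conj_assoc h.compl_compl h.odot_assoc,
    h.add_eq_one_iff, fun _ _ => h.eq_zero_of_one_add⟩

end Paper
end

section
/- Let C = (C,≤,⊙,→,',0,1) be a commutative unsharp residuated poset. For all a,b ∈ C: a⊙b is defined and a⊙b = 0 if and only if b = a'. -/
namespace Paper

variable {E : Type*}

/-- In a commutative unsharp residuated poset, `a ⊙ b` is defined and equals `0`
iff `b = a'`. -/
theorem stmt12 (le : E → E → Prop) (odot : E → E → Option E) (imp : E → E → Set E)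
    (compl : E → E) (zero one : E)
    (h : IsCURP le odot imp compl zero one) :
    ∀ a b : E, odot a b = some zero ↔ b = compl a := by
  intro a b
  constructor
  · intro hab
    have hdef : (odot a b).isSome := by rw [hab]; rfl
    have hab' : le (compl a) b := (h.odot_defined a b).mp hdef
    have hba : le (compl b) a := by
      have := h.compl_antitone _ _ hab'
      rwa [h.compl_compl] at this
    -- LHS of adjointness with x = a, y = b, z = zero
    have hL : setLE le (lcone le (odotLSet odot (ucone le {a, compl b}) b))
        (ucone le (lcone le {b, zero})) := by
      intro p hp q hq
      have h0mem : zero ∈ odotLSet odot (ucone le {a, compl b}) b := by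
        refine ⟨a, ?_, hab⟩
        intro y hy
        simp only [Set.mem_insert_iff, Set.mem_singleton_iff] at hy
        rcases hy with rfl | rfl
        · exact h.le_refl _
        · exact hba
      have hp0 : le p zero := hp zero h0mem
      have h0q : le zero q := hq zero (fun y _ => h.zero_le y)
      exact h.le_trans _ _ _ hp0 h0q
    have hR := (h.adjoint a b zero).mp hL
    have ha_mem : a ∈ lcone le (ucone le {a, compl b}) := by
      intro s hs
      exact hs a (Or.inl rfl)
    have hcb_mem : compl b ∈ ucone le (imp b zero) := by
      intro y hy
      rw [h.imp_zero] at hy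
      simp only [Set.mem_singleton_iff] at hy; subst hy
      exact h.le_refl _
    have hacb : le a (compl b) := hR a ha_mem (compl b) hcb_mem
    have hbca : le b (compl a) := by
      have := h.compl_antitone _ _ hacb
      rwa [h.compl_compl] at this
    exact h.le_antisymm _ _ hbca hab'
  · rintro rfl
    have hdef : (odot a (compl a)).isSome :=
      (h.odot_defined a (compl a)).mpr (h.le_refl _)
    obtain ⟨c, hc⟩ := Option.isSome_iff_exists.mp hdef
    -- RHS of adjointness with x = a, y = compl a, z = zero
    have hR : setLE le (lcone le (ucone le {a, compl (compl a)}))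
        (ucone le (imp (compl a) zero)) := by
      intro p hp q hq
      have hpa : le p a := hp a (fun y hy => by
        simp only [Set.mem_insert_iff, Set.mem_singleton_iff] at hy
        rcases hy with rfl | rfl
        · exact h.le_refl _
        · rw [h.compl_compl]; exact h.le_refl a)
      have haq : le a q := by
        have := hq (compl (compl a)) (by rw [h.imp_zero]; rfl)
        rwa [h.compl_compl] at this
      exact h.le_trans _ _ _ hpa haq
    have hL := (h.adjoint a (compl a) zero).mpr hR
    have hc_mem : c ∈ lcone le (odotLSet odot (ucone le {a, compl (compl a)}) (compl a)) := by
      rintro w ⟨s, hs, hw⟩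
      have has : le a s := hs a (Or.inl rfl)
      refine h.odot_mono a s (compl a) c w ?_ has hc hw
      rw [h.compl_compl]; exact h.le_refl a
    have h0_mem : zero ∈ ucone le (lcone le {compl a, zero}) := by
      intro y hy
      exact hy zero (Or.inr rfl)
    have hc0 : le c zero := hL c hc_mem zero h0_mem
    have : c = zero := h.le_antisymm _ _ hc0 (h.zero_le c)
    rw [hc, this]

end Paper
end

section
/- Let P = (P,+,‾,˜,0,1) be a good monotonous pseudoeffect algebra with induced order ≤. Define x⊙y := (x̄+ȳ)˜ (defined if and only if x̃ ≤ y), x→y := x̄ + L(x,y), and x⇝y := L(x,y) + x̃. Then (P,≤,⊙,→,⇝,‾,˜,0,1) is a divisible unsharp residuated poset. -/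
/-!
For `d ≤ y` the map `d ↦ ȳ + d` is an order isomorphism of `[0, y]` onto `[ȳ, 1]` with inverse
`s ↦ s ⊙ y`. It carries `U(x, ȳ) ⊙ y` to `U(x, ȳ)` and `L(y, z)` to `y → z`, so one direction
of (R4) is monotonicity of left addition of `ȳ`. For the other one must show that an element below
all upper bounds of `L(y, z)` that lie below `y` is below all its upper bounds; this is
monotonicity of right addition of `ỹ`, applied to the images of these sets under `d ↦ (ȳ + d)˜`,
because goodness gives `(ȳ + d)˜ + ỹ = d̃`. Divisibility is cancellation. Every statement about `⇝`
is the corresponding statement about `→` in the opposite algebra `(x, y) ↦ y + x`, which has the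
same order and swaps `‾` and `˜`.
-/

namespace Paper

variable {E : Type*}

section

variable {add : E → E → Option E} {lc rc : E → E} {zero one : E}

namespace IsPEA

theorem op (hP : IsPEA add lc rc zero one) : IsPEA (flip add) rc lc zero one where
  exists_left x y z h := hP.exists_right y x z h
  exists_right x y z h := hP.exists_left y x z h
  assoc x y z := (hP.assoc z y x).symm
  lc_iff := hP.rc_iff
  rc_iff := hP.lc_iff
  one_add := hP.add_one
  add_one := hP.one_add

theorem exists_add_assoc (hP : IsPEA add lc rc zero one) {x y z u w : E}
    (h₁ : add x y = some u) (h₂ : add u z = some w) :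
    ∃ v, add y z = some v ∧ add x v = some w := by
  have h := hP.assoc x y z
  rw [h₁, Option.bind_some, h₂] at h
  exact Option.bind_eq_some_iff.1 h.symm

theorem exists_add_assoc' (hP : IsPEA add lc rc zero one) {x y z v w : E}
    (h₁ : add y z = some v) (h₂ : add x v = some w) :
    ∃ u, add x y = some u ∧ add u z = some w :=
  hP.op.exists_add_assoc h₁ h₂

theorem lc_add_self (hP : IsPEA add lc rc zero one) (x : E) : add (lc x) x = some one :=
  (hP.lc_iff x _).2 rfl

theorem add_rc_self (hP : IsPEA add lc rc zero one) (x : E) : add x (rc x) = some one :=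
  hP.op.lc_add_self x

theorem rc_lc (hP : IsPEA add lc rc zero one) (x : E) : rc (lc x) = x :=
  ((hP.rc_iff (lc x) x).1 (hP.lc_add_self x)).symm

theorem lc_rc (hP : IsPEA add lc rc zero one) (x : E) : lc (rc x) = x :=
  hP.op.rc_lc x

theorem lc_one (hP : IsPEA add lc rc zero one) : lc one = zero :=
  hP.add_one _ _ (hP.lc_add_self one)

theorem zero_add (hP : IsPEA add lc rc zero one) (x : E) : add zero x = some x := by
  have h₀ : add zero one = some one := hP.lc_one ▸ hP.lc_add_self one
  obtain ⟨u, hu, hu₁⟩ := hP.exists_add_assoc' (hP.add_rc_self x) h₀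
  rwa [(hP.lc_iff _ u).1 hu₁, hP.lc_rc] at hu

theorem add_zero (hP : IsPEA add lc rc zero one) (x : E) : add x zero = some x :=
  hP.op.zero_add x

theorem lc_add_of_add (hP : IsPEA add lc rc zero one) {a b s : E} (h : add a b = some s) :
    add (lc s) a = some (lc b) := by
  obtain ⟨e, he, he₁⟩ := hP.exists_add_assoc' h (hP.lc_add_self s)
  rwa [← (hP.lc_iff b e).1 he₁]

theorem add_rc_of_add (hP : IsPEA add lc rc zero one) {a b s : E} (h : add a b = some s) :
    add b (rc s) = some (rc a) :=
  hP.op.lc_add_of_add h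

theorem lc_injective (hP : IsPEA add lc rc zero one) : Function.Injective lc :=
  fun a b h => by rw [← hP.rc_lc a, h, hP.rc_lc]

theorem add_left_cancel (hP : IsPEA add lc rc zero one) {a b c d : E}
    (h₁ : add a b = some d) (h₂ : add a c = some d) : b = c :=
  hP.lc_injective (Option.some.inj ((hP.lc_add_of_add h₁).symm.trans (hP.lc_add_of_add h₂)))

theorem le_refl (hP : IsPEA add lc rc zero one) (x : E) : eaLe add x x :=
  ⟨zero, hP.add_zero x⟩

theorem zero_le (hP : IsPEA add lc rc zero one) (x : E) : eaLe add zero x :=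
  ⟨x, hP.zero_add x⟩

theorem le_one (hP : IsPEA add lc rc zero one) (x : E) : eaLe add x one :=
  ⟨rc x, hP.add_rc_self x⟩

theorem le_trans (hP : IsPEA add lc rc zero one) {x y z : E}
    (h₁ : eaLe add x y) (h₂ : eaLe add y z) : eaLe add x z := by
  obtain ⟨s, hs⟩ := h₁
  obtain ⟨t, ht⟩ := h₂
  obtain ⟨v, -, hv⟩ := hP.exists_add_assoc hs ht
  exact ⟨v, hv⟩

theorem le_antisymm (hP : IsPEA add lc rc zero one) {x y : E}
    (h₁ : eaLe add x y) (h₂ : eaLe add y x) : x = y := by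
  obtain ⟨s, hs⟩ := h₁
  obtain ⟨t, ht⟩ := h₂
  obtain ⟨v, hv, hxv⟩ := hP.exists_add_assoc hs ht
  rw [hP.add_left_cancel hxv (hP.add_zero x)] at hv
  obtain ⟨w, hw, -⟩ := hP.exists_add_assoc hv (hP.zero_add one)
  rw [hP.add_one t w hw, hP.add_zero] at ht
  exact (Option.some.inj ht).symm

theorem eaLe_iff_exists_add_left (hP : IsPEA add lc rc zero one) {x y : E} :
    eaLe add x y ↔ ∃ u, add u x = some y :=
  ⟨fun ⟨_, h⟩ => hP.exists_left _ _ _ h, fun ⟨_, h⟩ => hP.exists_right _ _ _ h⟩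

theorem eaLe_flip (hP : IsPEA add lc rc zero one) : eaLe (flip add) = eaLe add :=
  funext fun _ => funext fun _ => propext hP.eaLe_iff_exists_add_left.symm

theorem exists_add_iff_le_rc (hP : IsPEA add lc rc zero one) {x y : E} :
    (∃ w, add x y = some w) ↔ eaLe add y (rc x) := by
  constructor
  · rintro ⟨w, hw⟩
    exact ⟨rc w, hP.add_rc_of_add hw⟩
  · rintro ⟨t, ht⟩
    obtain ⟨u, hu, -⟩ := hP.exists_add_assoc' ht (hP.add_rc_self x)
    exact ⟨u, hu⟩

theorem exists_add_iff_le_lc (hP : IsPEA add lc rc zero one) {x y : E} :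
    (∃ w, add x y = some w) ↔ eaLe add x (lc y) := by
  simpa only [hP.eaLe_flip, flip] using hP.op.exists_add_iff_le_rc (x := y) (y := x)

theorem exists_lc_add_iff (hP : IsPEA add lc rc zero one) {y d : E} :
    (∃ s, add (lc y) d = some s) ↔ eaLe add d y := by
  rw [hP.exists_add_iff_le_rc, hP.rc_lc]

theorem lc_antitone (hP : IsPEA add lc rc zero one) {x y : E} (h : eaLe add x y) :
    eaLe add (lc y) (lc x) := by
  obtain ⟨u, hu⟩ := hP.eaLe_iff_exists_add_left.1 h
  exact ⟨u, hP.lc_add_of_add hu⟩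

theorem rc_antitone (hP : IsPEA add lc rc zero one) {x y : E} (h : eaLe add x y) :
    eaLe add (rc y) (rc x) := by
  obtain ⟨t, ht⟩ := h
  exact hP.exists_right _ _ _ (hP.add_rc_of_add ht)

theorem lc_le_lc_iff (hP : IsPEA add lc rc zero one) {x y : E} :
    eaLe add (lc x) (lc y) ↔ eaLe add y x :=
  ⟨fun h => by simpa only [hP.rc_lc] using hP.rc_antitone h, hP.lc_antitone⟩

theorem rc_le_rc_iff (hP : IsPEA add lc rc zero one) {x y : E} :
    eaLe add (rc x) (rc y) ↔ eaLe add y x :=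
  ⟨fun h => by simpa only [hP.lc_rc] using hP.lc_antitone h, hP.rc_antitone⟩

theorem le_rc_iff (hP : IsPEA add lc rc zero one) {x y : E} :
    eaLe add x (rc y) ↔ eaLe add y (lc x) := by
  rw [← hP.lc_le_lc_iff, hP.lc_rc]

theorem lc_le_iff (hP : IsPEA add lc rc zero one) {x y : E} :
    eaLe add (lc x) y ↔ eaLe add (rc y) x := by
  rw [← hP.rc_le_rc_iff, hP.rc_lc]

theorem add_le_add_left (hP : IsPEA add lc rc zero one) {a b c p q : E}
    (hbc : eaLe add b c) (hb : add a b = some p) (hc : add a c = some q) : eaLe add p q := by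
  obtain ⟨t, ht⟩ := hbc
  obtain ⟨u, hu, hut⟩ := hP.exists_add_assoc' ht hc
  rw [hb] at hu
  exact ⟨t, Option.some.inj hu ▸ hut⟩

theorem le_of_add_le_add_left (hP : IsPEA add lc rc zero one) {a b c p q : E}
    (hb : add a b = some p) (hc : add a c = some q) (h : eaLe add p q) : eaLe add b c := by
  obtain ⟨t, ht⟩ := h
  obtain ⟨v, hv, hav⟩ := hP.exists_add_assoc hb ht
  exact ⟨t, hP.add_left_cancel hav hc ▸ hv⟩

theorem peaOdot_of_lc_add (hP : IsPEA add lc rc zero one) {y d s : E}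
    (h : add (lc y) d = some s) : peaOdot add lc rc s y = some d := by
  rw [peaOdot, hP.lc_add_of_add h, Option.map_some, hP.rc_lc]

theorem odotLSet_peaOdot_eq (hP : IsPEA add lc rc zero one) {S : Set E} {y : E}
    (hS : ∀ s ∈ S, eaLe add (lc y) s) :
    odotLSet (peaOdot add lc rc) S y = {d | ∃ s ∈ S, add (lc y) d = some s} := by
  ext d
  constructor
  · rintro ⟨s, hs, hsd⟩
    obtain ⟨d', hd'⟩ := hS s hs
    rw [hP.peaOdot_of_lc_add hd'] at hsd
    exact ⟨s, hs, Option.some.inj hsd ▸ hd'⟩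
  · rintro ⟨s, hs, h⟩
    exact ⟨s, hs, hP.peaOdot_of_lc_add h⟩

theorem isSome_peaOdot_iff (hP : IsPEA add lc rc zero one) (x y : E) :
    (peaOdot add lc rc x y).isSome ↔ eaLe add (rc x) y := by
  rw [peaOdot, Option.isSome_map, Option.isSome_iff_exists, hP.exists_add_iff_le_rc, hP.rc_lc,
    hP.lc_le_iff]

theorem peaOdot_assoc (hP : IsPEA add lc rc zero one) (x y z : E) :
    (peaOdot add lc rc x y).bind (fun u => peaOdot add lc rc u z) =
      (peaOdot add lc rc y z).bind (fun v => peaOdot add lc rc x v) := by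
  simpa only [peaOdot, Option.bind_map, Option.map_bind, Function.comp_def, hP.lc_rc] using
    congrArg (Option.map rc) (hP.assoc (lc x) (lc y) (lc z))

theorem peaOdot_one (hP : IsPEA add lc rc zero one) (x : E) :
    peaOdot add lc rc x one = some x := by
  rw [peaOdot, hP.lc_one, hP.add_zero, Option.map_some, hP.rc_lc]

theorem one_peaOdot (hP : IsPEA add lc rc zero one) (x : E) :
    peaOdot add lc rc one x = some x := by
  rw [peaOdot, hP.lc_one, hP.zero_add, Option.map_some, hP.rc_lc]

theorem peaOdot_lmono (hP : IsPEA add lc rc zero one) {x y z a b : E} (hxy : eaLe add x y)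
    (ha : peaOdot add lc rc z x = some a) (hb : peaOdot add lc rc z y = some b) :
    eaLe add a b := by
  obtain ⟨e, he, rfl⟩ := Option.map_eq_some_iff.1 ha
  obtain ⟨f, hf, rfl⟩ := Option.map_eq_some_iff.1 hb
  exact hP.rc_antitone (hP.add_le_add_left (hP.lc_antitone hxy) hf he)

theorem peaImp_zero (hP : IsPEA add lc rc zero one) (x : E) :
    peaImp add lc x zero = {lc x} := by
  ext w
  constructor
  · rintro ⟨c, hc, hw⟩
    rw [hP.le_antisymm (hc zero (by simp)) (hP.zero_le c), hP.add_zero] at hw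
    exact (Option.some.inj hw).symm
  · rintro rfl
    exact ⟨zero, fun u _ => hP.zero_le u, hP.add_zero (lc x)⟩

theorem peaImp_flip (hP : IsPEA add lc rc zero one) : peaImp (flip add) rc = peaImpW add rc := by
  unfold peaImp peaImpW
  rw [hP.eaLe_flip]
  rfl

theorem peaImpW_zero (hP : IsPEA add lc rc zero one) (x : E) :
    peaImpW add rc x zero = {rc x} := by
  rw [← hP.peaImp_flip, hP.op.peaImp_zero]

end IsPEA

namespace Good

/-- Both sides are `none` unless `x̃ ≤ y`, so goodness holds unconditionally. -/
theorem map_rc_add_lc (hG : Good add lc rc) (hP : IsPEA add lc rc zero one) (x y : E) :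
    (add (lc x) (lc y)).map rc = (add (rc x) (rc y)).map lc := by
  by_cases h : eaLe add (rc x) y
  · exact hG x y h
  · have h₁ : add (lc x) (lc y) = none := by
      by_contra h₁
      exact h (hP.lc_le_iff.1 (hP.rc_lc x ▸
        hP.exists_add_iff_le_rc.1 (Option.ne_none_iff_exists'.1 h₁)))
    have h₂ : add (rc x) (rc y) = none := by
      by_contra h₂
      exact h (hP.lc_rc y ▸ hP.exists_add_iff_le_lc.1 (Option.ne_none_iff_exists'.1 h₂))
    rw [h₁, h₂, Option.map_none, Option.map_none]

theorem op (hG : Good add lc rc) (hP : IsPEA add lc rc zero one) : Good (flip add) rc lc :=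
  fun x y _ => (hG.map_rc_add_lc hP y x).symm

theorem add_rc_of_lc_add (hG : Good add lc rc) (hP : IsPEA add lc rc zero one) {y d w : E}
    (h : add (lc y) d = some (lc w)) : add w (rc y) = some (rc d) := by
  have hgood := hG.map_rc_add_lc hP (lc w) y
  rw [hP.lc_add_of_add h, Option.map_some, hP.rc_lc, hP.rc_lc] at hgood
  obtain ⟨f, hf, rfl⟩ := Option.map_eq_some_iff.1 hgood.symm
  rw [hf, hP.rc_lc]

theorem compat (hG : Good add lc rc) (hP : IsPEA add lc rc zero one) (x y : E) :
    (peaOdot add lc rc (lc x) (lc y)).map rc = (peaOdot add lc rc (rc x) (rc y)).map lc := by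
  simp only [peaOdot, hG.map_rc_add_lc hP (lc x), Option.map_map, Function.comp_def,
    hP.rc_lc, hP.lc_rc, Option.map_id']

end Good

theorem odotLSet_flip (odot : E → E → Option E) (S : Set E) (y : E) :
    odotLSet (flip odot) S y = odotRSet odot y S :=
  rfl

theorem PEAMonotonous.op (hM : PEAMonotonous add lc rc) (hP : IsPEA add lc rc zero one) :
    PEAMonotonous (flip add) rc lc := by
  unfold PEAMonotonous
  rw [hP.eaLe_flip]
  exact ⟨hM.2, hM.1⟩

namespace IsPEA

theorem peaOdot_flip (hP : IsPEA add lc rc zero one) (hG : Good add lc rc) :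
    peaOdot (flip add) rc lc = flip (peaOdot add lc rc) :=
  funext fun x => funext fun y => (hG.map_rc_add_lc hP y x).symm

theorem peaOdot_rmono (hP : IsPEA add lc rc zero one) (hG : Good add lc rc)
    {x y z a b : E} (hxy : eaLe add x y)
    (ha : peaOdot add lc rc x z = some a) (hb : peaOdot add lc rc y z = some b) :
    eaLe add a b := by
  have h := hP.op.peaOdot_lmono (x := x) (y := y) (z := z) (a := a) (b := b)
  rw [hP.eaLe_flip, hP.peaOdot_flip hG] at h
  exact h hxy ha hb

theorem lcone_ucone_inter_lcone_subset (hP : IsPEA add lc rc zero one) (hG : Good add lc rc)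
    (hM : PEAMonotonous add lc rc) {y : E} {B₀ : Set E} (hne : B₀.Nonempty)
    (hBy : ∀ b ∈ B₀, eaLe add b y) :
    lcone (eaLe add) (ucone (eaLe add) B₀ ∩ lcone (eaLe add) {y}) ⊆
      lcone (eaLe add) (ucone (eaLe add) B₀) := by
  intro a ha b hb
  set A := lc ⁻¹' addLSet add (lc y) B₀
  set B := lc ⁻¹' addLSet add (lc y) (ucone (eaLe add) B₀)
  obtain ⟨b₀, hb₀⟩ := hne
  obtain ⟨s₀, hs₀⟩ := hP.exists_lc_add_iff.2 (hBy b₀ hb₀)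
  have hA : A.Nonempty := ⟨rc s₀, b₀, hb₀, by rw [hP.lc_rc]; exact hs₀⟩
  have hB : B.Nonempty := ⟨rc one, y, hBy, by rw [hP.lc_rc]; exact hP.lc_add_self y⟩
  have hAB : ∀ w ∈ A ∪ B, eaLe add w (lc (rc y)) := by
    rw [hP.lc_rc]
    rintro w (⟨d, -, hd⟩ | ⟨d, -, hd⟩) <;> exact hP.lc_le_lc_iff.1 ⟨d, hd⟩
  have hLU : setLE (eaLe add) (lcone (eaLe add) A) (ucone (eaLe add) B) := by
    intro ℓ hℓ t ht
    have hℓ' : ∀ {b s}, b ∈ B₀ → add (lc y) b = some s → eaLe add s (lc ℓ) := fun {b s} hb hs =>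
      hP.le_rc_iff.1 (hℓ (rc s) ⟨b, hb, by rw [hP.lc_rc]; exact hs⟩)
    obtain ⟨d, hd⟩ := hP.le_trans ⟨b₀, hs₀⟩ (hℓ' hb₀ hs₀)
    refine ht ℓ ⟨d, fun b hb => ?_, hd⟩
    obtain ⟨s, hs⟩ := hP.exists_lc_add_iff.2 (hBy b hb)
    exact hP.le_of_add_le_add_left hs hd (hℓ' hb hs)
  refine hP.rc_le_rc_iff.1 (hM.1 (rc y) A B hA hB hAB hLU (rc b) ?_ (rc a) ?_)
  · rintro _ ⟨w, ⟨b', hb', hw⟩, hwb⟩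
    rw [hG.add_rc_of_lc_add hP hw] at hwb
    exact Option.some.inj hwb ▸ hP.rc_antitone (hb b' hb')
  · rintro _ ⟨w, ⟨c, hc, hw⟩, hwc⟩
    rw [hG.add_rc_of_lc_add hP hw] at hwc
    have hcy : eaLe add c y := hP.exists_lc_add_iff.1 ⟨_, hw⟩
    exact Option.some.inj hwc ▸ hP.rc_antitone (ha c ⟨hc, by rintro _ rfl; exact hcy⟩)

theorem adjoint_r (hP : IsPEA add lc rc zero one) (hG : Good add lc rc)
    (hM : PEAMonotonous add lc rc) (x y z : E) :
    setLE (eaLe add) (lcone (eaLe add)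
        (odotLSet (peaOdot add lc rc) (ucone (eaLe add) {x, lc y}) y))
      (ucone (eaLe add) (lcone (eaLe add) {y, z})) ↔
    setLE (eaLe add) (lcone (eaLe add) (ucone (eaLe add) {x, lc y}))
      (ucone (eaLe add) (peaImp add lc y z)) := by
  set S := ucone (eaLe add) {x, lc y}
  set B₀ := lcone (eaLe add) {y, z}
  have hSy : ∀ s ∈ S, eaLe add (lc y) s := fun s hs => hs (lc y) (by simp)
  rw [hP.odotLSet_peaOdot_eq hSy]
  set T := {d | ∃ s ∈ S, add (lc y) d = some s}
  have hyT : y ∈ T := ⟨one, fun _ _ => hP.le_one _, hP.lc_add_self y⟩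
  have hB₀y : ∀ b ∈ B₀, eaLe add b y := fun b hb => hb y (by simp)
  have hB₀ : B₀.Nonempty := ⟨zero, fun _ _ => hP.zero_le _⟩
  constructor
  · intro hL ℓ hℓ t ht
    have hTB : ∀ w ∈ T ∪ B₀, eaLe add w (rc (lc y)) := by
      rw [hP.rc_lc]
      rintro w (hw | hw)
      · obtain ⟨s, -, hs⟩ := hw
        exact hP.exists_lc_add_iff.1 ⟨s, hs⟩
      · exact hB₀y w hw
    refine hM.2 (lc y) T B₀ ⟨y, hyT⟩ hB₀ hTB hL ℓ ?_ t ht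
    rintro s ⟨d, ⟨s', hs', hds'⟩, hds⟩
    rw [hds'] at hds
    exact Option.some.inj hds ▸ hℓ s' hs'
  · intro hR a ha t ht
    refine hP.lcone_ucone_inter_lcone_subset hG hM hB₀ hB₀y (fun c ⟨hc, hcy⟩ => ?_) t ht
    obtain ⟨sa, hsa⟩ := hP.exists_lc_add_iff.2 (ha y hyT)
    obtain ⟨sc, hsc⟩ := hP.exists_lc_add_iff.2 (hcy y rfl)
    refine hP.le_of_add_le_add_left hsa hsc (hR sa (fun s hs => ?_) sc ?_)
    · obtain ⟨d, hd⟩ := hSy s hs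
      exact hP.add_le_add_left (ha d ⟨s, hs, hd⟩) hsa hd
    · rintro w ⟨c', hc', hw⟩
      exact hP.add_le_add_left (hc c' hc') hw hsc

theorem adjoint_l (hP : IsPEA add lc rc zero one) (hG : Good add lc rc)
    (hM : PEAMonotonous add lc rc) (x y z : E) :
    setLE (eaLe add) (lcone (eaLe add)
        (odotRSet (peaOdot add lc rc) y (ucone (eaLe add) {x, rc y})))
      (ucone (eaLe add) (lcone (eaLe add) {y, z})) ↔
    setLE (eaLe add) (lcone (eaLe add) (ucone (eaLe add) {x, rc y}))
      (ucone (eaLe add) (peaImpW add rc y z)) := by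
  have h := hP.op.adjoint_r (hG.op hP) (hM.op hP) x y z
  rwa [hP.eaLe_flip, hP.peaOdot_flip hG, hP.peaImp_flip, odotLSet_flip] at h

theorem odotLSet_peaImp (hP : IsPEA add lc rc zero one) {x y : E} (hxy : eaLe add x y) :
    odotLSet (peaOdot add lc rc) (peaImp add lc y x) y = lcone (eaLe add) {x} := by
  rw [hP.odotLSet_peaOdot_eq (by rintro s ⟨c, -, hc⟩; exact ⟨c, hc⟩)]
  ext d
  constructor
  · rintro ⟨s, ⟨c, hc, hcs⟩, hds⟩
    intro u hu
    rw [hP.add_left_cancel hds hcs, Set.mem_singleton_iff.1 hu]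
    exact hc x (by simp)
  · intro hd
    have hdx : eaLe add d x := hd x rfl
    obtain ⟨s, hs⟩ := hP.exists_lc_add_iff.2 (hP.le_trans hdx hxy)
    refine ⟨s, ⟨d, ?_, hs⟩, hs⟩
    rintro _ (rfl | rfl)
    exacts [hP.le_trans hdx hxy, hdx]

theorem odotRSet_peaImpW (hP : IsPEA add lc rc zero one) (hG : Good add lc rc) {x y : E}
    (hxy : eaLe add x y) :
    odotRSet (peaOdot add lc rc) y (peaImpW add rc y x) = lcone (eaLe add) {x} := by
  have h := hP.op.odotLSet_peaImp (hP.eaLe_flip ▸ hxy)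
  rwa [hP.eaLe_flip, hP.peaOdot_flip hG, hP.peaImp_flip, odotLSet_flip] at h

end IsPEA

end

/-- Theorem 7 of the paper: a good monotonous pseudoeffect algebra becomes a
divisible unsharp residuated poset via `x ⊙ y := (x̄ + ȳ)˜`, `x → y := x̄ + L(x,y)`
and `x ⇝ y := L(x,y) + x̃`. -/
theorem stmt14 (add : E → E → Option E) (lc rc : E → E) (zero one : E)
    (hP : IsPEA add lc rc zero one) (hG : Good add lc rc)
    (hM : PEAMonotonous add lc rc) :
    IsURP (eaLe add) (peaOdot add lc rc) (peaImp add lc) (peaImpW add rc)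
        lc rc zero one ∧
    (∀ x y, eaLe add x y →
      odotLSet (peaOdot add lc rc) (peaImp add lc y x) y = lcone (eaLe add) {x} ∧
      odotRSet (peaOdot add lc rc) y (peaImpW add rc y x) = lcone (eaLe add) {x}) :=
  ⟨{ le_refl := hP.le_refl
     le_antisymm := fun _ _ => hP.le_antisymm
     le_trans := fun _ _ _ => hP.le_trans
     zero_le := hP.zero_le
     le_one := hP.le_one
     rc_lc := hP.rc_lc
     lc_rc := hP.lc_rc
     lc_antitone := fun _ _ => hP.lc_antitone
     rc_antitone := fun _ _ => hP.rc_antitone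
     odot_defined := hP.isSome_peaOdot_iff
     odot_assoc := hP.peaOdot_assoc
     odot_one := hP.peaOdot_one
     one_odot := hP.one_peaOdot
     odot_rmono := fun _ _ _ _ _ _ => hP.peaOdot_rmono hG
     odot_lmono := fun _ _ _ _ _ _ => hP.peaOdot_lmono
     adjoint_r := hP.adjoint_r hG hM
     adjoint_l := hP.adjoint_l hG hM
     imp_zero := hP.peaImp_zero
     impW_zero := hP.peaImpW_zero
     compat := hG.compat hP },
   fun _ _ hxy => ⟨hP.odotLSet_peaImp hxy, hP.odotRSet_peaImpW hG hxy⟩⟩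

end Paper
end
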